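/- arXiv:1601.00966 — 4 statements merged into one kernel-verified Lean document; each statement's English description precedes it below -/
import Mathlib

section
/- Let G = (P,E) be a finite connected simple graph, let a and b be two distinct vertices of G, and let W : E → ℝ be an edge-weight function. Define the weight of an a–b path ω as W(ω) = min over the edges e of ω of W(e), and the weight of an a–b cut C as W(C) = max over the edges e of the cut-set C̃ of W(e). Then the weight of the widest a–b path equals the weight of the minimum a–b cut: max over a–b paths ω of W(ω) = min over a–b cuts C of W(C). -/
/-- The cut-set of an `a`–`b` cut `(A, Aᶜ)` in a graph `G`: the edges of `G` with one
endpoint in `A` and the other endpoint outside `A`. -/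
def cutSet {V : Type*} (G : SimpleGraph V) (A : Set V) : Set (Sym2 V) :=
  {e | e ∈ G.edgeSet ∧ ∃ u v, e = s(u, v) ∧ u ∈ A ∧ v ∉ A}

/-- Any walk from a vertex in `A` to a vertex outside `A` crosses the cut. -/
lemma exists_crossing_edge {V : Type*} (G : SimpleGraph V) (A : Set V) :
    ∀ {u v : V} (p : G.Walk u v), u ∈ A → v ∉ A →
      ∃ e ∈ p.edges, e ∈ cutSet G A := by
  intro u v p
  induction p with
  | nil => intro hu hv; exact absurd hu hv
  | @cons u c v h q ih =>
    intro hu hv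
    by_cases hc : c ∈ A
    · obtain ⟨e, he, hce⟩ := ih hc hv
      exact ⟨e, List.mem_cons_of_mem _ he, hce⟩
    · exact ⟨s(u, c), List.mem_cons_self,
        ⟨h, u, c, rfl, hu, hc⟩⟩

/-- **Cut property of the widest path.** In a finite connected simple graph with edge
weights `W`, the weight of the widest `a`–`b` path (maximizing the minimum edge weight
along the path) equals the weight of the minimum `a`–`b` cut (minimizing the maximum
edge weight across the cut-set). -/
theorem widest_path_eq_min_cut {V : Type*} [Fintype V] (G : SimpleGraph V)
    (hG : G.Connected) (a b : V) (hab : a ≠ b) (W : Sym2 V → ℝ) :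
    sSup {x : ℝ | ∃ p : G.Walk a b, p.IsPath ∧
        x = sInf (W '' {e | e ∈ p.edges})} =
    sInf {x : ℝ | ∃ A : Set V, a ∈ A ∧ b ∉ A ∧
        x = sSup (W '' cutSet G A)} := by
  classical
  set PS := {x : ℝ | ∃ p : G.Walk a b, p.IsPath ∧
      x = sInf (W '' {e | e ∈ p.edges})} with hPS
  set CS := {x : ℝ | ∃ A : Set V, a ∈ A ∧ b ∉ A ∧
      x = sSup (W '' cutSet G A)} with hCS
  -- edges of a walk as a set, finiteness
  have hedgesfin : ∀ {u v : V} (p : G.Walk u v),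
      (W '' {e | e ∈ p.edges}).Finite := fun p =>
    ((p.edges.finite_toSet).image W)
  have hedgesne : ∀ {u v : V} (p : G.Walk u v), u ≠ v →
      (W '' {e | e ∈ p.edges}).Nonempty := by
    intro u v p huv
    rcases p with _ | ⟨h, q⟩
    · exact absurd rfl huv
    · exact ⟨W s(u, _), Set.mem_image_of_mem _ List.mem_cons_self⟩
  -- PS is finite
  have hPSfin : PS.Finite := by
    have : PS ⊆ (fun p : {p : G.Walk a b // p.IsPath ∧ p.length < Fintype.card V} =>
        sInf (W '' {e | e ∈ p.1.edges})) '' Set.univ := by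
      rintro x ⟨p, hp, rfl⟩
      exact ⟨⟨p, hp, hp.length_lt⟩, Set.mem_univ _, rfl⟩
    exact Set.Finite.subset (Set.toFinite _) this
  -- PS is nonempty
  obtain ⟨w⟩ := hG.preconnected a b
  have hPSne : PS.Nonempty :=
    ⟨_, w.toPath.1, w.toPath.2, rfl⟩
  -- CS is finite
  have hCSfin : CS.Finite := by
    have : CS ⊆ (fun A : Set V => sSup (W '' cutSet G A)) '' Set.univ := by
      rintro x ⟨A, _, _, rfl⟩
      exact ⟨A, Set.mem_univ _, rfl⟩
    exact Set.Finite.subset (Set.toFinite _) this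
  -- key: every path weight ≤ every cut weight
  have weak : ∀ x ∈ PS, ∀ y ∈ CS, x ≤ y := by
    rintro x ⟨p, hp, rfl⟩ y ⟨A, haA, hbA, rfl⟩
    obtain ⟨e, hep, hec⟩ := exists_crossing_edge G A p haA hbA
    calc sInf (W '' {e | e ∈ p.edges}) ≤ W e :=
          csInf_le (hedgesfin p).bddBelow (Set.mem_image_of_mem _ hep)
      _ ≤ sSup (W '' cutSet G A) :=
          le_csSup ((Set.toFinite (cutSet G A)).image W).bddAbove
            (Set.mem_image_of_mem _ hec)
  set M := sSup PS with hM
  have hMmem : ∀ x ∈ PS, x ≤ M := fun x hx => le_csSup hPSfin.bddAbove hx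
  -- the good cut
  set A : Set V := {v | v = a ∨ ∃ p : G.Walk a v, M < sInf (W '' {e | e ∈ p.edges})}
    with hA
  have haA : a ∈ A := Or.inl rfl
  have hbA : b ∉ A := by
    rintro (rfl | ⟨p, hp⟩)
    · exact hab rfl
    · -- turn the walk into a path, weight only increases
      have hsub : W '' {e | e ∈ (p.toPath : G.Walk a b).edges} ⊆
          W '' {e | e ∈ p.edges} :=
        Set.image_mono fun e he => p.edges_toPath_subset he
      have h1 : sInf (W '' {e | e ∈ p.edges}) ≤
          sInf (W '' {e | e ∈ (p.toPath : G.Walk a b).edges}) :=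
        csInf_le_csInf (hedgesfin p).bddBelow
          (hedgesne (p.toPath : G.Walk a b) hab) hsub
      have h2 : sInf (W '' {e | e ∈ (p.toPath : G.Walk a b).edges}) ∈ PS :=
        ⟨_, (p.toPath).2, rfl⟩
      exact absurd (hMmem _ h2) (not_le.mpr (lt_of_lt_of_le hp h1))
  -- all cut edges have weight ≤ M
  have hcutle : ∀ e ∈ cutSet G A, W e ≤ M := by
    rintro e ⟨he, u, v, rfl, huA, hvA⟩
    by_contra hlt
    push_neg at hlt
    have hadj : G.Adj u v := he
    apply hvA
    rcases huA with rfl | ⟨p, hp⟩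
    · -- direct edge from a
      refine Or.inr ⟨SimpleGraph.Walk.cons hadj SimpleGraph.Walk.nil, ?_⟩
      have : W '' {e | e ∈ (SimpleGraph.Walk.cons hadj SimpleGraph.Walk.nil).edges}
          = {W s(u, v)} := by
        simp [Set.image_singleton]
      rw [this, csInf_singleton]
      exact hlt
    · -- extend the walk to u by the edge
      refine Or.inr ⟨p.concat hadj, ?_⟩
      have hset : {e | e ∈ (p.concat hadj).edges} =
          {e | e ∈ p.edges} ∪ {s(u, v)} := by
        ext f
        simp [SimpleGraph.Walk.edges_concat, List.concat_eq_append,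
          or_comm, Set.mem_union]
      have himg : W '' {e | e ∈ (p.concat hadj).edges} =
          (W '' {e | e ∈ p.edges}) ∪ {W s(u, v)} := by
        rw [hset, Set.image_union, Set.image_singleton]
      rw [himg]
      have hne : ((W '' {e | e ∈ p.edges}) ∪ {W s(u, v)}).Nonempty :=
        ⟨W s(u, v), Or.inr rfl⟩
      have hfin : ((W '' {e | e ∈ p.edges}) ∪ {W s(u, v)}).Finite :=
        (hedgesfin p).union (Set.finite_singleton _)
      have hall : ∀ x ∈ (W '' {e | e ∈ p.edges}) ∪ {W s(u, v)}, M < x := by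
        rintro x (hx | hx)
        · exact lt_of_lt_of_le hp (csInf_le (hedgesfin p).bddBelow hx)
        · rw [Set.mem_singleton_iff] at hx; subst hx; exact hlt
      exact hall _ (hne.csInf_mem hfin)
  -- the cut set is nonempty
  have hcutne : (cutSet G A).Nonempty := by
    obtain ⟨p, hp, _⟩ := hPSne.some_mem
    obtain ⟨e, _, hec⟩ := exists_crossing_edge G A p haA hbA
    exact ⟨e, hec⟩
  have hcutWne : (W '' cutSet G A).Nonempty := hcutne.image W
  -- the cut weight is ≤ M
  have hcutM : sSup (W '' cutSet G A) ≤ M := by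
    apply csSup_le hcutWne
    rintro x ⟨e, he, rfl⟩
    exact hcutle e he
  have hCSmem : sSup (W '' cutSet G A) ∈ CS := ⟨A, haA, hbA, rfl⟩
  apply le_antisymm
  · exact csSup_le hPSne fun x hx =>
      le_csInf ⟨_, hCSmem⟩ fun y hy => weak x hx y hy
  · exact le_trans (csInf_le hCSfin.bddBelow hCSmem) hcutM
end

section
/- Let G = (P,E) be a finite connected simple graph with distinct vertices a, b and edge weights W : E → ℝ, and let T be a maximum spanning tree of G. Let ω_T be the unique a–b path contained in T. Then ω_T is a widest a–b path of G: its weight min_{e ∈ ω_T} W(e) equals the maximum over all a–b paths ω of G of the path weight min_{e ∈ ω} W(e). -/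
open SimpleGraph

private lemma edges_mapLe' {V : Type*} {G G' : SimpleGraph V} (h : G ≤ G') {u v : V}
    (p : G.Walk u v) : (p.mapLe h).edges = p.edges := by
  have hid : ⇑(Hom.ofLE h) = id := funext fun _ => rfl
  simp [Walk.mapLe, Walk.edges_map, hid, Sym2.map_id, List.map_id]

/-- Cycle property: every edge on the tree path between the endpoints of a graph edge
has weight at least the weight of that edge, when the tree is maximum. -/
private lemma cycle_property {V : Type*} [Fintype V] {G : SimpleGraph V}
    {T : SimpleGraph V} (hTG : T ≤ G) (hT : T.IsTree) (W : Sym2 V → ℝ)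
    (hmax : ∀ T' : SimpleGraph V, T' ≤ G → T'.IsTree →
      (∑ᶠ e ∈ T'.edgeSet, W e) ≤ ∑ᶠ e ∈ T.edgeSet, W e)
    {u v : V} (huv : G.Adj u v) {r : T.Walk u v} (hr : r.IsPath) :
    ∀ f ∈ r.edges, W s(u, v) ≤ W f := by
  classical
  by_contra hcon
  push_neg at hcon
  obtain ⟨f, hf, hWf⟩ := hcon
  revert hf hWf
  induction f using Sym2.ind with
  | _ x y =>
  intro hf hWf
  have hune : u ≠ v := huv.ne
  have hfT : s(x, y) ∈ T.edgeSet := r.edges_subset_edgeSet hf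
  -- the new edge is not in T
  have heT : s(u, v) ∉ T.edgeSet := by
    intro heT
    have hadj : T.Adj u v := heT
    have hpath : (Walk.cons hadj Walk.nil).IsPath := by simp [hune]
    have hreq : r = Walk.cons hadj Walk.nil := (hT.existsUnique_path u v).unique hr hpath
    rw [hreq] at hf
    simp only [Walk.edges_cons, Walk.edges_nil, List.mem_singleton] at hf
    rw [hf] at hWf
    exact lt_irrefl _ hWf
  set D := T \ fromEdgeSet {s(x, y)} with hD
  have hDT : D ≤ T := sdiff_le
  have hDedge : D.edgeSet = T.edgeSet \ {s(x, y)} := by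
    rw [hD, edgeSet_sdiff, edgeSet_fromEdgeSet, edgeSet_sdiff_sdiff_isDiag]
  -- u and v are not reachable in D
  have hnotreach : ¬ D.Reachable u v := by
    rintro ⟨p'⟩
    have hfp' : s(x, y) ∉ (p'.mapLe hDT).edges := by
      rw [edges_mapLe']
      intro hmem
      have := p'.edges_subset_edgeSet hmem
      rw [hDedge] at this
      exact this.2 rfl
    have hbe : (p'.mapLe hDT).bypass = r :=
      (hT.existsUnique_path u v).unique (Walk.bypass_isPath _) hr
    exact hfp' (Walk.edges_bypass_subset _ (hbe ▸ hf))
  -- every vertex reaches x or y in D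
  have hstep : ∀ (w z : V) (c : T.Walk w z),
      (D.Reachable z x ∨ D.Reachable z y) → (D.Reachable w x ∨ D.Reachable w y) := by
    intro w z c
    induction c with
    | nil => exact id
    | cons h q ih =>
      rename_i w' z' _
      intro hz
      rcases ih hz with hv1 | hv1
      · by_cases hef : s(w', z') = s(x, y)
        · rcases Sym2.eq_iff.1 hef with ⟨rfl, rfl⟩ | ⟨rfl, rfl⟩
          · exact Or.inl (Reachable.refl _)
          · exact Or.inr (Reachable.refl _)
        · have hDadj : D.Adj w' z' := by
            rw [hD, sdiff_adj]
            exact ⟨h, fun hc => hef ((fromEdgeSet_adj _).1 hc).1⟩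
          exact Or.inl (hDadj.reachable.trans hv1)
      · by_cases hef : s(w', z') = s(x, y)
        · rcases Sym2.eq_iff.1 hef with ⟨rfl, rfl⟩ | ⟨rfl, rfl⟩
          · exact Or.inl (Reachable.refl _)
          · exact Or.inr (Reachable.refl _)
        · have hDadj : D.Adj w' z' := by
            rw [hD, sdiff_adj]
            exact ⟨h, fun hc => hef ((fromEdgeSet_adj _).1 hc).1⟩
          exact Or.inr (hDadj.reachable.trans hv1)
  have hcut : ∀ w : V, D.Reachable w x ∨ D.Reachable w y := by
    intro w
    obtain ⟨c⟩ := hT.isConnected.preconnected w x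
    exact hstep w x c (Or.inl (Reachable.refl _))
  -- the exchanged graph
  set T' := fromEdgeSet (insert s(u, v) (T.edgeSet \ {s(x, y)})) with hT'def
  have hT'e : T'.edgeSet = insert s(u, v) (T.edgeSet \ {s(x, y)}) := by
    rw [hT'def, edgeSet_fromEdgeSet]
    ext g
    simp only [Set.mem_diff, Set.mem_setOf_eq, Set.mem_insert_iff, Set.mem_singleton_iff]
    constructor
    · exact fun h => h.1
    · intro h
      refine ⟨h, ?_⟩
      rcases h with rfl | ⟨hg, -⟩
      · exact fun hd => huv.ne (Sym2.mk_isDiag_iff.1 hd)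
      · exact T.not_isDiag_of_mem_edgeSet hg
  have hT'G : T' ≤ G := by
    rw [← edgeSet_subset_edgeSet, hT'e]
    rintro g (rfl | ⟨hg, -⟩)
    · exact huv
    · exact edgeSet_mono hTG hg
  have hDT' : D ≤ T' := by
    rw [← edgeSet_subset_edgeSet, hT'e, hDedge]
    exact Set.subset_insert _ _
  have hT'uv : T'.Adj u v := by
    rw [← mem_edgeSet, hT'e]
    exact Set.mem_insert _ _
  -- reachability of x and y in T'
  have hxyT' : T'.Reachable x y := by
    rcases hcut u with h1 | h1 <;> rcases hcut v with h2 | h2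
    · exact absurd (h1.trans h2.symm) hnotreach
    · exact ((h1.mono hDT').symm.trans (hT'uv.reachable.trans (h2.mono hDT')))
    · exact ((h2.mono hDT').symm.trans (hT'uv.symm.reachable.trans (h1.mono hDT')))
    · exact absurd (h1.trans h2.symm) hnotreach
  have hT'conn : T'.Connected := by
    rw [connected_iff]
    refine ⟨fun w z => ?_, ⟨u⟩⟩
    have hall : ∀ w : V, T'.Reachable w x := fun w =>
      (hcut w).elim (fun h => h.mono hDT') (fun h => (h.mono hDT').trans hxyT'.symm)
    exact (hall w).trans (hall z).symm
  have hT'acyc : T'.IsAcyclic := by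
    intro w c hc
    by_cases hec : s(u, v) ∈ c.edges
    · have hcyc := (adj_and_reachable_delete_edges_iff_exists_cycle
        (G := T') (v := u) (w := v)).2 ⟨w, c, hc, hec⟩
      apply hnotreach
      refine Reachable.mono ?_ hcyc.2
      rw [← edgeSet_subset_edgeSet, edgeSet_deleteEdges, hT'e, hDedge]
      rintro g ⟨hg1, hg2⟩
      have hg2' : g ≠ s(u, v) := by
        intro h
        apply hg2
        rw [h]
        exact rfl
      rcases hg1 with rfl | hg1
      · exact absurd rfl hg2'
      · exact hg1
    · have hce : ∀ g ∈ c.edges, g ∈ T.edgeSet := by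
        intro g hg
        have hmem := c.edges_subset_edgeSet hg
        rw [hT'e] at hmem
        rcases hmem with rfl | ⟨h1, -⟩
        · exact absurd hg hec
        · exact h1
      exact hT.IsAcyclic _ (hc.transfer hce)
  have hT'tree : T'.IsTree := ⟨hT'conn, hT'acyc⟩
  -- weight comparison
  have hfinT : T.edgeSet.Finite := T.edgeSet.toFinite
  set sT := hfinT.toFinset with hsT
  have h1 : ∑ᶠ g ∈ T.edgeSet, W g = ∑ g ∈ sT, W g := by
    rw [← finsum_mem_coe_finset, Set.Finite.coe_toFinset]
  have hsetT' : T'.edgeSet = ↑(insert s(u, v) (sT.erase s(x, y))) := by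
    rw [hT'e, Finset.coe_insert, Finset.coe_erase, hsT, Set.Finite.coe_toFinset]
  have h2 : ∑ᶠ g ∈ T'.edgeSet, W g = ∑ g ∈ insert s(u, v) (sT.erase s(x, y)), W g := by
    rw [hsetT', finsum_mem_coe_finset]
  have heS : s(u, v) ∉ sT.erase s(x, y) := fun h =>
    heT ((Set.Finite.mem_toFinset hfinT).1 (Finset.mem_of_mem_erase h))
  have hfS : s(x, y) ∈ sT := (Set.Finite.mem_toFinset hfinT).2 hfT
  have h3 : ∑ g ∈ insert s(u, v) (sT.erase s(x, y)), W g
      = W s(u, v) + (∑ g ∈ sT, W g - W s(x, y)) := by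
    rw [Finset.sum_insert heS, Finset.sum_erase_eq_sub hfS]
  have hle := hmax T' hT'G hT'tree
  rw [h1, h2, h3] at hle
  linarith

private lemma build_walk {V : Type*} [Fintype V] {G : SimpleGraph V}
    {T : SimpleGraph V} (hTG : T ≤ G) (hT : T.IsTree) (W : Sym2 V → ℝ)
    (hmax : ∀ T' : SimpleGraph V, T' ≤ G → T'.IsTree →
      (∑ᶠ e ∈ T'.edgeSet, W e) ≤ ∑ᶠ e ∈ T.edgeSet, W e)
    (c : ℝ) : ∀ {x z : V} (q' : G.Walk x z), (∀ f ∈ q'.edges, c ≤ W f) →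
      ∃ tw : T.Walk x z, ∀ f ∈ tw.edges, c ≤ W f := by
  intro x z q'
  induction q' with
  | nil => exact fun _ => ⟨Walk.nil, by simp⟩
  | cons h q'' ih =>
    rename_i x' y' z'
    intro hq'
    obtain ⟨tw2, htw2⟩ := ih (fun f hf => hq' f (by simp [hf]))
    obtain ⟨r, hr, -⟩ := hT.existsUnique_path x' y'
    have hrf : ∀ f ∈ r.edges, W s(x', y') ≤ W f :=
      cycle_property hTG hT W hmax h hr
    have hcxy : c ≤ W s(x', y') := hq' _ (by simp)
    refine ⟨r.append tw2, fun f hf => ?_⟩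
    rw [Walk.edges_append, List.mem_append] at hf
    rcases hf with hf | hf
    · exact hcxy.trans (hrf f hf)
    · exact htw2 f hf

/-- **The unique path in a maximum spanning tree is a widest path.** Let `T` be a
spanning tree of a finite connected simple graph `G` maximizing the total edge weight,
and let `p` be the (unique) `a`–`b` path inside `T`. Then the weight of `p` (the minimum
edge weight along it) equals the maximum, over all `a`–`b` paths `q` of `G`, of the path
weight of `q`. -/
theorem mst_path_is_widest {V : Type*} [Fintype V] (G : SimpleGraph V)
    (hG : G.Connected) (a b : V) (hab : a ≠ b) (W : Sym2 V → ℝ)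
    (T : SimpleGraph V) (hTG : T ≤ G) (hT : T.IsTree)
    (hmax : ∀ T' : SimpleGraph V, T' ≤ G → T'.IsTree →
      (∑ᶠ e ∈ T'.edgeSet, W e) ≤ ∑ᶠ e ∈ T.edgeSet, W e)
    (p : T.Walk a b) (hp : p.IsPath) :
    sInf (W '' {e | e ∈ p.edges}) =
      sSup {x : ℝ | ∃ q : G.Walk a b, q.IsPath ∧
        x = sInf (W '' {e | e ∈ q.edges})} := by
  classical
  have hpedges_ne : p.edges ≠ [] := by
    intro h
    apply hab
    apply Walk.eq_of_length_eq_zero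
    rw [← Walk.length_edges, h, List.length_nil]
  have hpne : (W '' {e | e ∈ p.edges}).Nonempty := by
    obtain ⟨f, hf⟩ := List.exists_mem_of_ne_nil _ hpedges_ne
    exact ⟨W f, ⟨f, hf, rfl⟩⟩
  have hmem : sInf (W '' {e | e ∈ p.edges}) ∈ {x : ℝ | ∃ q : G.Walk a b, q.IsPath ∧
      x = sInf (W '' {e | e ∈ q.edges})} := by
    refine ⟨p.mapLe hTG, (Walk.mapLe_isPath hTG).2 hp, ?_⟩
    rw [edges_mapLe']
  have hub : ∀ z ∈ {x : ℝ | ∃ q : G.Walk a b, q.IsPath ∧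
      x = sInf (W '' {e | e ∈ q.edges})}, z ≤ sInf (W '' {e | e ∈ p.edges}) := by
    rintro z ⟨q, hq, rfl⟩
    have hqfin : (W '' {e | e ∈ q.edges}).Finite := (q.edges.finite_toSet).image W
    have hlb : ∀ f ∈ q.edges, sInf (W '' {e | e ∈ q.edges}) ≤ W f := fun f hf =>
      csInf_le hqfin.bddBelow ⟨f, hf, rfl⟩
    obtain ⟨tw, htw⟩ := build_walk hTG hT W hmax _ q hlb
    have hbe : tw.bypass = p := (hT.existsUnique_path a b).unique (Walk.bypass_isPath _) hp
    have hplb : ∀ f ∈ p.edges, sInf (W '' {e | e ∈ q.edges}) ≤ W f := fun f hf =>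
      htw f (Walk.edges_bypass_subset _ (hbe ▸ hf))
    exact le_csInf hpne (by rintro z ⟨f, hf, rfl⟩; exact hplb f hf)
  exact le_antisymm (le_csSup ⟨_, hub⟩ hmem) (csSup_le ⟨_, hmem⟩ hub)
end

section
/- Let η ∈ (0,1), let N be a natural number, and let η₀, …, η_N ∈ (0,1) satisfy ∏_{i=0}^{N} η_i = η. Then min_{0 ≤ i ≤ N} ( −log₂(1−η_i) ) ≤ −log₂( 1 − η^{1/(N+1)} ), and equality holds when η_i = η^{1/(N+1)} for every i. In other words, among all ways of splitting a lossy line of total transmissivity η into N+1 lossy segments, the equidistant split with equal transmissivities η^{1/(N+1)} maximizes the chain capacity min_i C(η_i), where C(η) = −log₂(1−η). -/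
/-- **Equidistant repeaters are optimal for a lossy chain.** If a lossy line of total
transmissivity `η ∈ (0,1)` is split into `N+1` lossy channels of transmissivities
`ηs i ∈ (0,1)` with `∏ i, ηs i = η`, then the chain capacity
`min_i (−log₂ (1 − ηs i))` is at most `−log₂ (1 − η^(1/(N+1)))`, with equality when
`ηs i = η^(1/(N+1))` for every `i`. -/
theorem equidistant_repeaters_optimal (η : ℝ) (hη : η ∈ Set.Ioo (0:ℝ) 1) (N : ℕ)
    (ηs : Fin (N + 1) → ℝ) (hηs : ∀ i, ηs i ∈ Set.Ioo (0:ℝ) 1)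
    (hprod : ∏ i, ηs i = η) :
    (⨅ i, -Real.logb 2 (1 - ηs i)) ≤ -Real.logb 2 (1 - η ^ (((N : ℝ) + 1)⁻¹)) ∧
    ((∀ i, ηs i = η ^ (((N : ℝ) + 1)⁻¹)) →
      (⨅ i, -Real.logb 2 (1 - ηs i)) = -Real.logb 2 (1 - η ^ (((N : ℝ) + 1)⁻¹))) := by
  obtain ⟨hη0, hη1⟩ := hη
  set c : ℝ := η ^ (((N : ℝ) + 1)⁻¹) with hc
  have hNpos : (0:ℝ) < (N : ℝ) + 1 := by positivity
  have hc0 : 0 < c := Real.rpow_pos_of_pos hη0 _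
  have hc1 : c < 1 := Real.rpow_lt_one hη0.le hη1 (by positivity)
  -- c ^ (N+1) = η
  have hpow : c ^ (N + 1) = η := by
    rw [hc, ← Real.rpow_natCast (η ^ (((N : ℝ) + 1)⁻¹)) (N + 1),
        ← Real.rpow_mul hη0.le]
    push_cast
    rw [inv_mul_cancel₀ hNpos.ne', Real.rpow_one]
  -- there exists i with ηs i ≤ c
  have hex : ∃ i, ηs i ≤ c := by
    by_contra h
    push_neg at h
    have hlt : ∏ i : Fin (N + 1), c < ∏ i, ηs i :=
      Finset.prod_lt_prod_of_nonempty (fun i _ => hc0) (fun i _ => h i)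
        ⟨0, Finset.mem_univ 0⟩
    rw [Finset.prod_const, Finset.card_univ, Fintype.card_fin, hpow, hprod] at hlt
    exact lt_irrefl _ hlt
  obtain ⟨i, hi⟩ := hex
  have hbdd : BddBelow (Set.range fun i => -Real.logb 2 (1 - ηs i)) := by
    refine ⟨0, fun x hx => ?_⟩
    obtain ⟨j, rfl⟩ := hx
    have h1 : 1 - ηs j < 1 := by have := (hηs j).1; linarith
    have h0 : 0 < 1 - ηs j := by have := (hηs j).2; linarith
    simp only [neg_nonneg]
    exact Real.logb_nonpos (by norm_num) h0.le h1.le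
  have hkey : -Real.logb 2 (1 - ηs i) ≤ -Real.logb 2 (1 - c) := by
    have h0 : 0 < 1 - c := by linarith
    have hle : 1 - c ≤ 1 - ηs i := by linarith
    exact neg_le_neg ((Real.logb_le_logb (by norm_num : (1:ℝ) < 2) h0 (by linarith [(hηs i).2])).mpr hle)
  constructor
  · exact le_trans (ciInf_le hbdd i) hkey
  · intro hall
    have : (fun i => -Real.logb 2 (1 - ηs i)) = fun _ : Fin (N + 1) => -Real.logb 2 (1 - c) :=
      funext fun j => by rw [hall j]
    rw [this, ciInf_const]
end

section
/- Fix η ∈ (0,1) and for each natural number N ≥ 1 define C_loss(η,N) = −log₂(1 − η^{1/(N+1)}), the capacity of a lossy chain of N equidistant repeaters over a line of total transmissivity η. Then, as N → ∞, C_loss(η,N) − log₂ N converges to −log₂( ln(1/η) ); equivalently, C_loss(η,N) = log₂ N − log₂ ln(1/η) + o(1), so the capacity scales logarithmically in the number of repeaters. -/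
open Filter Real

/-- **Logarithmic scaling of the lossy-chain capacity in the number of repeaters.**
For fixed total transmissivity `η ∈ (0,1)`, the capacity
`C_loss(η,N) = −log₂ (1 − η^(1/(N+1)))` of a chain of `N` equidistant repeaters
satisfies `C_loss(η,N) − log₂ N → −log₂ (ln (1/η))` as `N → ∞`. -/
theorem lossy_chain_log_scaling (η : ℝ) (hη : η ∈ Set.Ioo (0:ℝ) 1) :
    Filter.Tendsto
      (fun N : ℕ =>
        (-Real.logb 2 (1 - η ^ (((N : ℝ) + 1)⁻¹))) - Real.logb 2 (N : ℝ))
      Filter.atTop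
      (nhds (-Real.logb 2 (Real.log (1 / η)))) := by
  obtain ⟨hη0, hη1⟩ := hη
  set c : ℝ := Real.log (1 / η) with hc
  have hc_eq : c = -Real.log η := by rw [hc, one_div, Real.log_inv]
  have hc_pos : 0 < c := Real.log_pos (by rw [lt_div_iff₀ hη0]; linarith)
  -- the function  f h = 1 - exp (-c h)  has derivative c at 0
  have hderiv : HasDerivAt (fun h : ℝ => 1 - Real.exp (-c * h)) c 0 := by
    have h1 : HasDerivAt (fun h : ℝ => Real.exp (-c * h)) (-c) 0 := by
      have := ((hasDerivAt_id (0:ℝ)).const_mul (-c)).exp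
      simpa using this
    simpa using (h1.const_sub 1)
  have hslope := hasDerivAt_iff_tendsto_slope.mp hderiv
  -- the sequence h N = 1/(N+1) tends to 0 within {0}ᶜ
  have hseq : Tendsto (fun N : ℕ => ((N : ℝ) + 1)⁻¹) atTop (nhdsWithin 0 {0}ᶜ) := by
    apply tendsto_nhdsWithin_of_tendsto_nhds_of_eventually_within
    · simpa [one_div] using tendsto_one_div_add_atTop_nhds_zero_nat (𝕜 := ℝ)
    · filter_upwards with N
      have : (0:ℝ) < (N : ℝ) + 1 := by positivity
      simp [this.ne']
  have hslope_seq := hslope.comp hseq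
  -- N/(N+1) → 1
  have hratio : Tendsto (fun N : ℕ => (N : ℝ) / ((N : ℝ) + 1)) atTop (nhds 1) := by
    have h := tendsto_one_div_add_atTop_nhds_zero_nat (𝕜 := ℝ)
    have := (tendsto_const_nhds (x := (1:ℝ)) (f := atTop)).sub h
    rw [sub_zero] at this
    refine this.congr fun N => ?_
    have hN : ((N : ℝ) + 1) ≠ 0 := by positivity
    field_simp
    ring
  -- main limit: N * (1 - η^(1/(N+1))) → c
  have hmain : Tendsto (fun N : ℕ => (N : ℝ) * (1 - η ^ (((N : ℝ) + 1)⁻¹)))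
      atTop (nhds c) := by
    have hprod := hratio.mul hslope_seq
    rw [one_mul] at hprod
    refine hprod.congr fun N => ?_
    have hN1 : (0:ℝ) < (N : ℝ) + 1 := by positivity
    have hrpow : η ^ (((N : ℝ) + 1)⁻¹) = Real.exp (-c * ((N:ℝ)+1)⁻¹) := by
      rw [Real.rpow_def_of_pos hη0, hc_eq]; ring_nf
    simp only [Function.comp, slope_def_field, hrpow]
    rw [mul_zero, Real.exp_zero]
    have hN1' : ((N:ℝ)+1)⁻¹ ≠ 0 := by positivity
    field_simp
    ring
  -- continuity of -logb 2 at c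
  have hcont : ContinuousAt (fun x : ℝ => -Real.logb 2 x) c :=
    (Real.continuousAt_logb hc_pos.ne').neg
  have hfinal := (hcont.tendsto).comp hmain
  refine hfinal.congr' ?_
  filter_upwards [eventually_ge_atTop 1] with N hN
  have hN0 : (0:ℝ) < (N : ℝ) := by exact_mod_cast hN
  have hN1 : (0:ℝ) < (N : ℝ) + 1 := by positivity
  have hx : (0:ℝ) < (((N : ℝ) + 1)⁻¹) := by positivity
  have hlt : η ^ (((N : ℝ) + 1)⁻¹) < 1 :=
    Real.rpow_lt_one hη0.le hη1 hx
  have hpos : (0:ℝ) < 1 - η ^ (((N : ℝ) + 1)⁻¹) := by linarith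
  show -Real.logb 2 ((N:ℝ) * (1 - η ^ (((N : ℝ) + 1)⁻¹)))
      = -Real.logb 2 (1 - η ^ (((N : ℝ) + 1)⁻¹)) - Real.logb 2 (N : ℝ)
  rw [Real.logb_mul hN0.ne' hpos.ne']
  ring
end
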